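/- arXiv:math/9901007 — 3 statements merged into one kernel-verified Lean document; each statement's English description precedes it below -/
import Mathlib

section
/- Let D ⊆ ℂ be a nonempty connected open set, let φ, ψ : ℂ → ℂ be real analytic on D, let ζ⁰ ∈ D with ψ(ζ⁰) ≠ 0, and suppose there is an open set W with ζ⁰ ∈ W ⊆ D such that the function z ↦ φ(z)/ψ(z) is holomorphic on W. Then for every ζ′ ∈ D there exist an open connected set V with ζ′ ∈ V ⊆ D and functions φ̂, ψ̂ : ℂ → ℂ holomorphic on V, with ψ̂ not identically zero on V, such that φ(z)·ψ̂(z) = φ̂(z)·ψ(z) for every z ∈ V (i.e. the quotient h = φ/ψ is meromorphic on D, represented locally as a quotient of holomorphic functions). -/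
/-!
Write `∂̄` for the Wirtinger derivative `(∂ₓ + i ∂_y) / 2`. Near `ζ0` we have `φ = h ψ` with `h`
holomorphic, so the real analytic function `φ ∂̄ψ - ∂̄φ ψ` vanishes near `ζ0`, hence on all of `D`.
Near any `ζ' ∈ D` complexify: `φ z = Φ (z, z̄)` and `ψ z = Ψ (z, z̄)` with `Φ, Ψ` holomorphic on a
bidisc. The Wronskian `Φ ∂_w Ψ - ∂_w Φ Ψ` restricts to `φ ∂̄ψ - ∂̄φ ψ` on the totally real
antidiagonal `w = z̄`, so it vanishes identically, and for each fixed `z` the functions `Φ (z, ·)`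
and `Ψ (z, ·)` are proportional. Freezing `w = w₀ := z̄₀` at a point `z₀` with `ψ z₀ ≠ 0` gives
holomorphic `φ̂ = Φ (·, w₀)` and `ψ̂ = Ψ (·, w₀)` with `φ ψ̂ = φ̂ ψ`.
-/

open Complex Metric Set Filter Topology ComplexConjugate
open scoped NNReal ENNReal

noncomputable def dbar (f : ℂ → ℂ) (z : ℂ) : ℂ := (fderiv ℝ f z 1 + I * fderiv ℝ f z I) / 2

theorem AnalyticOnNhd.dbar {f : ℂ → ℂ} {s : Set ℂ} (hf : AnalyticOnNhd ℝ f s) :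
    AnalyticOnNhd ℝ (dbar f) s := by
  have hDf := hf.fderiv
  have h1 := (ContinuousLinearMap.apply ℝ ℂ (1 : ℂ)).comp_analyticOnNhd hDf
  have hI := (ContinuousLinearMap.apply ℝ ℂ I).comp_analyticOnNhd hDf
  exact fun z hz => ((h1 z hz).add (analyticAt_const.mul (hI z hz))).div_const

theorem DifferentiableAt.dbar_eq_zero {f : ℂ → ℂ} {z : ℂ} (hf : DifferentiableAt ℂ f z) :
    dbar f z = 0 := by
  have := (hf.hasDerivAt.hasFDerivAt.restrictScalars ℝ).fderiv
  simp only [dbar, this, ContinuousLinearMap.coe_restrictScalars',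
    ContinuousLinearMap.toSpanSingleton_apply, smul_eq_mul, one_mul]
  linear_combination deriv f z / 2 * I_mul_I

theorem Filter.EventuallyEq.dbar_eq {f g : ℂ → ℂ} {z : ℂ} (h : f =ᶠ[𝓝 z] g) :
    dbar f z = dbar g z := by
  rw [dbar, dbar, h.fderiv_eq]

theorem dbar_mul {f g : ℂ → ℂ} {z : ℂ} (hf : DifferentiableAt ℝ f z)
    (hg : DifferentiableAt ℝ g z) :
    dbar (fun w => f w * g w) z = dbar f z * g z + f z * dbar g z := by
  simp only [dbar, fderiv_fun_mul hf hg, add_apply, smul_apply, smul_eq_mul]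
  ring

theorem dbar_eq_fderiv_apply_snd {F : ℂ × ℂ → ℂ} {f : ℂ → ℂ} {z : ℂ}
    (hF : DifferentiableAt ℂ F (z, conj z))
    (hfF : (fun w => F (w, conj w)) =ᶠ[𝓝 z] f) :
    dbar f z = fderiv ℂ F (z, conj z) (0, 1) := by
  set L := fderiv ℂ F (z, conj z)
  let j : ℂ →L[ℝ] ℂ × ℂ := (ContinuousLinearMap.id ℝ ℂ).prod conjCLE.toContinuousLinearMap
  have hj : HasFDerivAt (fun w : ℂ => (w, conj w)) j z := j.hasFDerivAt
  have hf : HasFDerivAt f ((L.restrictScalars ℝ).comp j) z :=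
    ((hF.hasFDerivAt.restrictScalars ℝ).comp z hj).congr_of_eventuallyEq hfF.symm
  have h1 : L (1, 1) = L (1, 0) + L (0, 1) := by rw [← L.map_add]; simp
  have hI : L (I, -I) = I * L (1, 0) - I * L (0, 1) := by
    rw [show ((I, -I) : ℂ × ℂ) = I • (1, 0) - I • (0, 1) by simp]
    rw [L.map_sub, L.map_smul, L.map_smul, smul_eq_mul, smul_eq_mul]
  have hf1 : fderiv ℝ f z 1 = L (1, 1) := by simp [hf.fderiv, j]
  have hfI : fderiv ℝ f z I = L (I, -I) := by simp [hf.fderiv, j]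
  rw [dbar, hf1, hfI, h1, hI]
  linear_combination (L (1, 0) / 2 - L (0, 1) / 2) * I_mul_I

theorem AnalyticOnNhd.eqOn_zero_of_ofReal {g : ℂ → ℂ} {ρ : ℝ} (hρ : 0 < ρ)
    (hg : AnalyticOnNhd ℂ g (ball 0 ρ)) (h : ∀ t : ℝ, (t : ℂ) ∈ ball 0 ρ → g t = 0) :
    EqOn g 0 (ball 0 ρ) := by
  have hreal : ∀ᶠ t : ℝ in 𝓝[≠] 0, g t = 0 := by
    refine nhdsWithin_le_nhds ?_
    filter_upwards [(continuous_ofReal.tendsto' 0 0 ofReal_zero).eventually (ball_mem_nhds 0 hρ)]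
      using h
  have hofReal : Tendsto ((↑) : ℝ → ℂ) (𝓝[≠] 0) (𝓝[≠] 0) :=
    tendsto_nhdsWithin_of_tendsto_nhds_of_eventually_within _
      ((continuous_ofReal.tendsto' 0 0 ofReal_zero).mono_left nhdsWithin_le_nhds)
      (eventually_mem_nhdsWithin.mono fun _ ht => ofReal_ne_zero.2 ht)
  exact hg.eqOn_zero_of_preconnected_of_frequently_eq_zero (convex_ball _ _).isPreconnected
    (mem_ball_self hρ) (hofReal.frequently hreal.frequently)

theorem AnalyticOnNhd.eqOn_zero_of_ofReal_prod {G : ℂ × ℂ → ℂ} {ρ : ℝ} (hρ : 0 < ρ)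
    (hG : AnalyticOnNhd ℂ G (ball 0 ρ))
    (h : ∀ s t : ℝ, ((s : ℂ), (t : ℂ)) ∈ ball 0 ρ → G (s, t) = 0) :
    EqOn G 0 (ball 0 ρ) := by
  rw [← Prod.mk_zero_zero, ← ball_prod_same] at hG h ⊢
  have slice_fst : ∀ t ∈ ball (0 : ℂ) ρ, AnalyticOnNhd ℂ (fun s => G (s, t)) (ball (0 : ℂ) ρ) :=
    fun t ht => hG.comp (analyticOnNhd_id.prod analyticOnNhd_const) fun s hs => ⟨hs, ht⟩
  have slice_snd : ∀ s ∈ ball (0 : ℂ) ρ, AnalyticOnNhd ℂ (fun t => G (s, t)) (ball (0 : ℂ) ρ) :=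
    fun s hs => hG.comp (analyticOnNhd_const.prod analyticOnNhd_id) fun t ht => ⟨hs, ht⟩
  have real_snd : ∀ t : ℝ, (t : ℂ) ∈ ball (0 : ℂ) ρ → ∀ s ∈ ball (0 : ℂ) ρ, G (s, t) = 0 :=
    fun t ht => (slice_fst t ht).eqOn_zero_of_ofReal hρ fun s hs => h s t ⟨hs, ht⟩
  rintro ⟨s, t⟩ ⟨hs, ht⟩
  exact (slice_snd s hs).eqOn_zero_of_ofReal hρ (fun t' ht' => real_snd t' ht' s hs) ht

theorem AnalyticAt.eventuallyEq_zero_of_conj {H : ℂ × ℂ → ℂ} {c : ℂ}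
    (hH : AnalyticAt ℂ H (c, conj c)) (h : ∀ᶠ z in 𝓝 c, H (z, conj z) = 0) :
    H =ᶠ[𝓝 (c, conj c)] 0 := by
  -- affine coordinates `(s, t)` in which the antidiagonal `{(z, z̄)}` is `ℝ × ℝ`
  let P : ℂ × ℂ → ℂ × ℂ := fun v => (c + (v.1 + I * v.2), conj c + (v.1 - I * v.2))
  let Q : ℂ × ℂ → ℂ × ℂ := fun x =>
    ((x.1 - c + (x.2 - conj c)) / 2, (x.1 - c - (x.2 - conj c)) / (2 * I))
  have hPQ : ∀ x, P (Q x) = x := by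
    rintro ⟨z, w⟩
    simp only [P, Q, Prod.mk.injEq]
    constructor <;> field_simp <;> ring_nf
  have hP_real : ∀ s t : ℝ, P (s, t) = (c + (s + I * t), conj (c + (s + I * t))) := by
    intro s t
    simp [P, conj_ofReal, sub_eq_add_neg]
  have hP : AnalyticAt ℂ (H ∘ P) 0 :=
    AnalyticAt.comp (by simpa [P] using hH) <|
      (analyticAt_const.add (analyticAt_fst.add (analyticAt_const.mul analyticAt_snd))).prod
      (analyticAt_const.add (analyticAt_fst.sub (analyticAt_const.mul analyticAt_snd)))
  obtain ⟨ρ, hρ, hPρ⟩ := hP.exists_ball_analyticOnNhd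
  obtain ⟨ε, hε, hHε⟩ := eventually_nhds_iff_ball.1 h
  set δ := min ρ (ε / 2)
  have hδ : 0 < δ := lt_min hρ (half_pos hε)
  have hHP : EqOn (H ∘ P) 0 (ball 0 δ) := by
    refine (hPρ.mono (ball_subset_ball (min_le_left _ _))).eqOn_zero_of_ofReal_prod hδ ?_
    intro s t hst
    rw [← Prod.mk_zero_zero, ← ball_prod_same, mem_prod, mem_ball_zero_iff, mem_ball_zero_iff,
      norm_real, norm_real] at hst
    rw [Function.comp_apply, hP_real]
    refine hHε _ ?_
    calc dist (c + (s + I * t)) c = ‖(s : ℂ) + I * t‖ := by simp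
      _ ≤ ‖s‖ + ‖t‖ := by simpa using norm_add_le (s : ℂ) (I * t)
      _ < ε := by linarith [min_le_right ρ (ε / 2), hst.1, hst.2]
  have hQ : Tendsto Q (𝓝 (c, conj c)) (𝓝 0) :=
    (Continuous.tendsto' (by fun_prop) _ _ (by simp [Q]))
  filter_upwards [(hHP.eventuallyEq_of_mem (ball_mem_nhds 0 hδ)).comp_tendsto hQ] with x hx
  simpa [hPQ] using hx

theorem AnalyticOnNhd.mul_eq_mul_of_wronskian_eq_zero {𝕜 : Type*} [RCLike 𝕜] {a b : 𝕜 → 𝕜}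
    {U : Set 𝕜} (hU : IsOpen U) (hUc : IsPreconnected U) (ha : AnalyticOnNhd 𝕜 a U)
    (hb : AnalyticOnNhd 𝕜 b U) (hW : ∀ w ∈ U, a w * deriv b w - deriv a w * b w = 0)
    {w w' : 𝕜} (hw : w ∈ U) (hw' : w' ∈ U) : a w * b w' = a w' * b w := by
  by_cases hb0 : ∀ v ∈ U, b v = 0
  · rw [hb0 w hw, hb0 w' hw', mul_zero, mul_zero]
  push Not at hb0
  obtain ⟨w₁, hw₁, hbw₁⟩ := hb0
  obtain ⟨ε, hε, hεU⟩ := Metric.mem_nhds_iff.1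
    (inter_mem (hU.mem_nhds hw₁) ((hb w₁ hw₁).continuousAt.eventually_ne hbw₁))
  have hquot : ∀ v ∈ ball w₁ ε, a v / b v = a w₁ / b w₁ := by
    have hderiv : ∀ v ∈ ball w₁ ε,
        HasDerivAt (fun v => a v / b v) ((deriv a v * b v - a v * deriv b v) / b v ^ 2) v :=
      fun v hv => (ha v (hεU hv).1).differentiableAt.hasDerivAt.div
        (hb v (hεU hv).1).differentiableAt.hasDerivAt (hεU hv).2
    refine fun v hv => isOpen_ball.is_const_of_deriv_eq_zero (convex_ball _ _).isPreconnected
      (fun v hv => (hderiv v hv).differentiableAt.differentiableWithinAt) (fun v hv => ?_) hv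
      (mem_ball_self hε)
    rw [(hderiv v hv).deriv, Pi.zero_apply, div_eq_zero_iff]
    exact Or.inl (by linear_combination -hW v (hεU hv).1)
  have hprop : ∀ v ∈ U, a v * b w₁ = a w₁ * b v := by
    have hE : AnalyticOnNhd 𝕜 (fun v => a v * b w₁ - a w₁ * b v) U :=
      (ha.mul analyticOnNhd_const).sub (analyticOnNhd_const.mul hb)
    refine fun v hv =>
      sub_eq_zero.1 (hE.eqOn_zero_of_preconnected_of_eventuallyEq_zero hUc hw₁ ?_ hv)
    filter_upwards [ball_mem_nhds w₁ hε] with v hv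
    rw [Pi.zero_apply, sub_eq_zero, ← div_eq_div_iff (hεU hv).2 hbw₁]
    exact hquot v hv
  exact mul_right_cancel₀ hbw₁
    (by linear_combination b w' * hprop w hw - b w * hprop w' hw')

noncomputable def reImForm : Fin 2 → ℂ × ℂ →L[ℂ] ℂ :=
  ![(2 : ℂ)⁻¹ • (ContinuousLinearMap.fst ℂ ℂ ℂ + ContinuousLinearMap.snd ℂ ℂ ℂ),
    (2 * I)⁻¹ • (ContinuousLinearMap.fst ℂ ℂ ℂ - ContinuousLinearMap.snd ℂ ℂ ℂ)]

theorem reImForm_apply (i : Fin 2) (v : ℂ × ℂ) :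
    reImForm i v = ![(v.1 + v.2) / 2, (v.1 - v.2) / (2 * I)] i := by
  fin_cases i <;> simp [reImForm, div_eq_inv_mul, mul_add]

theorem reImForm_apply_conj (i : Fin 2) (u : ℂ) :
    reImForm i (u, conj u) = basisOneI.repr u i := by
  fin_cases i <;> simp [reImForm_apply, add_conj, sub_conj, mul_div_mul_right _ _ I_ne_zero]

theorem norm_reImForm_le (i : Fin 2) : ‖reImForm i‖ ≤ 1 := by
  refine ContinuousLinearMap.opNorm_le_bound _ zero_le_one fun v => ?_
  have h1 : ‖v.1‖ ≤ ‖v‖ := norm_fst_le v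
  have h2 : ‖v.2‖ ≤ ‖v‖ := norm_snd_le v
  fin_cases i <;> simp only [Fin.zero_eta, Fin.mk_one, reImForm_apply, Matrix.cons_val_zero,
    Matrix.cons_val_one, Matrix.cons_val_fin_one, norm_div, norm_mul, norm_ofNat, norm_I, mul_one,
    one_mul]
  · linarith [norm_add_le v.1 v.2]
  · linarith [norm_sub_le v.1 v.2]

theorem Complex.norm_basisOneI (i : Fin 2) : ‖basisOneI i‖ = 1 := by
  fin_cases i <;> simp

namespace ContinuousMultilinearMap

variable {n : ℕ}

noncomputable def complexification (m : ContinuousMultilinearMap ℝ (fun _ : Fin n => ℂ) ℂ) :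
    ContinuousMultilinearMap ℂ (fun _ : Fin n => ℂ × ℂ) ℂ :=
  ∑ r : Fin n → Fin 2, m (fun j => basisOneI (r j)) •
    (ContinuousMultilinearMap.mkPiAlgebra ℂ (Fin n) ℂ).compContinuousLinearMap
      (fun j => reImForm (r j))

theorem complexification_apply_conj (m : ContinuousMultilinearMap ℝ (fun _ : Fin n => ℂ) ℂ)
    (v : Fin n → ℂ) : m.complexification (fun j => (v j, conj (v j))) = m v := by
  conv_rhs => rw [← funext fun j => basisOneI.sum_repr (v j), m.map_sum]
  simp only [complexification, sum_apply, smul_apply, compContinuousLinearMap_apply,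
    mkPiAlgebra_apply, reImForm_apply_conj, map_smul_univ]
  refine Finset.sum_congr rfl fun r _ => ?_
  rw [Complex.real_smul, ofReal_prod, smul_eq_mul, mul_comm]

theorem norm_complexification_le (m : ContinuousMultilinearMap ℝ (fun _ : Fin n => ℂ) ℂ) :
    ‖m.complexification‖ ≤ 2 ^ n * ‖m‖ := by
  calc ‖m.complexification‖
      ≤ ∑ r : Fin n → Fin 2, ‖m (fun j => basisOneI (r j))‖ *
          ‖(ContinuousMultilinearMap.mkPiAlgebra ℂ (Fin n) ℂ).compContinuousLinearMap
            (fun j => reImForm (r j))‖ :=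
        (norm_sum_le _ _).trans (Finset.sum_le_sum fun r _ => (norm_smul _ _).le)
    _ ≤ ∑ _r : Fin n → Fin 2, ‖m‖ * 1 := by
        refine Finset.sum_le_sum fun r _ => mul_le_mul ?_ ?_ (norm_nonneg _) (norm_nonneg _)
        · simpa only [norm_basisOneI, Finset.prod_const_one, mul_one] using
            m.le_opNorm (fun j => basisOneI (r j))
        · refine (norm_compContinuousLinearMap_le _ _).trans ?_
          rw [norm_mkPiAlgebra, one_mul]
          exact Finset.prod_le_one (fun _ _ => norm_nonneg _) fun j _ => norm_reImForm_le _
    _ = 2 ^ n * ‖m‖ := by simp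

end ContinuousMultilinearMap

namespace FormalMultilinearSeries

noncomputable def complexification (p : FormalMultilinearSeries ℝ ℂ ℂ) :
    FormalMultilinearSeries ℂ (ℂ × ℂ) ℂ :=
  fun n => (p n).complexification

theorem le_radius_complexification (p : FormalMultilinearSeries ℝ ℂ ℂ) {r : ℝ≥0}
    (hr : ((2 * r : ℝ≥0) : ℝ≥0∞) < p.radius) : (r : ℝ≥0∞) ≤ p.complexification.radius := by
  obtain ⟨C, -, hC⟩ := p.norm_mul_pow_le_of_lt_radius hr
  refine p.complexification.le_radius_of_bound C fun n => ?_
  calc ‖(p n).complexification‖ * r ^ n ≤ 2 ^ n * ‖p n‖ * r ^ n := by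
        gcongr; exact (p n).norm_complexification_le
    _ = ‖p n‖ * ((2 * r : ℝ≥0) : ℝ) ^ n := by push_cast; ring
    _ ≤ C := hC n

theorem complexification_sum_conj (p : FormalMultilinearSeries ℝ ℂ ℂ) (u : ℂ) :
    p.complexification.sum (u, conj u) = p.sum u := by
  simp only [FormalMultilinearSeries.sum, complexification,
    ContinuousMultilinearMap.complexification_apply_conj]

end FormalMultilinearSeries

theorem AnalyticAt.exists_complexification {f : ℂ → ℂ} {ζ : ℂ} (hf : AnalyticAt ℝ f ζ) :
    ∃ r > 0, ∃ F : ℂ × ℂ → ℂ, AnalyticOnNhd ℂ F (ball (ζ, conj ζ) r) ∧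
      ∀ z ∈ ball ζ r, F (z, conj z) = f z := by
  obtain ⟨p, R, hR⟩ := hf
  obtain ⟨r₀, hr₀, hr₀R⟩ := ENNReal.lt_iff_exists_nnreal_btwn.1 hR.r_pos
  set r : ℝ≥0 := r₀ / 2
  have hr : 0 < r := half_pos (by exact_mod_cast hr₀)
  have hsub : ∀ {E : Type} [SeminormedAddCommGroup E] {x c : E}, x ∈ ball c r →
      x - c ∈ eball (0 : E) r := by
    intro E _ x c hx
    rwa [eball_coe, mem_ball_zero_iff, ← dist_eq_norm]
  have hrad : (r : ℝ≥0∞) ≤ p.complexification.radius :=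
    p.le_radius_complexification (by simpa [r, mul_div_cancel₀] using hr₀R.trans_le hR.r_le)
  refine ⟨r, hr, fun x => p.complexification.sum (x - (ζ, conj ζ)), ?_, fun z hz => ?_⟩
  · exact p.complexification.analyticOnNhd.comp (analyticOnNhd_id.sub analyticOnNhd_const)
      fun x hx => eball_subset_eball hrad (hsub hx)
  · have hzR : z - ζ ∈ eball 0 R :=
      eball_subset_eball ((ENNReal.coe_le_coe.2 (NNReal.half_le_self r₀)).trans hr₀R.le) (hsub hz)
    simp only [Prod.mk_sub_mk, ← map_sub, p.complexification_sum_conj, ← hR.sum hzR,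
      add_sub_cancel]

theorem dbar_wronskian_eq_zero_of_differentiableAt_div {φ ψ : ℂ → ℂ} {z : ℂ}
    (hq : DifferentiableAt ℂ (fun w => φ w / ψ w) z) (hψ : DifferentiableAt ℝ ψ z)
    (hψz : ψ z ≠ 0) : φ z * dbar ψ z - dbar φ z * ψ z = 0 := by
  have hφ : φ =ᶠ[𝓝 z] fun w => φ w / ψ w * ψ w := by
    filter_upwards [hψ.continuousAt.eventually_ne hψz] with w hw
    rw [div_mul_cancel₀ _ hw]
  rw [hφ.dbar_eq, dbar_mul (hq.restrictScalars ℝ) hψ, hq.dbar_eq_zero, zero_mul, zero_add]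
  field_simp
  ring

theorem wronskian_complexification_eq_zero {φ ψ : ℂ → ℂ} {Φ Ψ : ℂ × ℂ → ℂ} {ζ : ℂ} {r : ℝ}
    (hr : 0 < r) (hΦ : AnalyticOnNhd ℂ Φ (ball (ζ, conj ζ) r))
    (hΨ : AnalyticOnNhd ℂ Ψ (ball (ζ, conj ζ) r))
    (hΦφ : ∀ z ∈ ball ζ r, Φ (z, conj z) = φ z) (hΨψ : ∀ z ∈ ball ζ r, Ψ (z, conj z) = ψ z)
    (hg : ∀ᶠ z in 𝓝 ζ, φ z * dbar ψ z - dbar φ z * ψ z = 0) {x : ℂ × ℂ}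
    (hx : x ∈ ball (ζ, conj ζ) r) :
    Φ x * fderiv ℂ Ψ x (0, 1) - fderiv ℂ Φ x (0, 1) * Ψ x = 0 := by
  have hT : AnalyticOnNhd ℂ (fun x => Φ x * fderiv ℂ Ψ x (0, 1) - fderiv ℂ Φ x (0, 1) * Ψ x)
      (ball (ζ, conj ζ) r) := by
    have hΦ' := (ContinuousLinearMap.apply ℂ ℂ ((0, 1) : ℂ × ℂ)).comp_analyticOnNhd hΦ.fderiv
    have hΨ' := (ContinuousLinearMap.apply ℂ ℂ ((0, 1) : ℂ × ℂ)).comp_analyticOnNhd hΨ.fderiv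
    exact (hΦ.mul hΨ').sub (hΦ'.mul hΨ)
  have hdiag : ∀ z ∈ ball ζ r, (z, conj z) ∈ ball (ζ, conj ζ) r := fun z hz => by
    rw [← ball_prod_same]
    exact ⟨hz, by rwa [mem_ball, dist_conj_conj]⟩
  have hcomplexify : ∀ {F : ℂ × ℂ → ℂ} {f : ℂ → ℂ}, AnalyticOnNhd ℂ F (ball (ζ, conj ζ) r) →
      (∀ z ∈ ball ζ r, F (z, conj z) = f z) →
      ∀ z ∈ ball ζ r, dbar f z = fderiv ℂ F (z, conj z) (0, 1) := fun hF hFf z hz =>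
    dbar_eq_fderiv_apply_snd (hF _ (hdiag z hz)).differentiableAt
      (eventually_of_mem (isOpen_ball.mem_nhds hz) hFf)
  refine hT.eqOn_zero_of_preconnected_of_eventuallyEq_zero (convex_ball _ _).isPreconnected
    (mem_ball_self hr) ((hT _ (mem_ball_self hr)).eventuallyEq_zero_of_conj ?_) hx
  filter_upwards [hg, isOpen_ball.mem_nhds (mem_ball_self hr)] with z hgz hz
  rwa [hΦφ z hz, hΨψ z hz, ← hcomplexify hΦ hΦφ z hz, ← hcomplexify hΨ hΨψ z hz]

theorem mul_eq_mul_of_wronskian_snd_eq_zero {Φ Ψ : ℂ × ℂ → ℂ} {U V : Set ℂ} (hV : IsOpen V)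
    (hVc : IsPreconnected V) (hΦ : AnalyticOnNhd ℂ Φ (U ×ˢ V)) (hΨ : AnalyticOnNhd ℂ Ψ (U ×ˢ V))
    (hW : ∀ x ∈ U ×ˢ V, Φ x * fderiv ℂ Ψ x (0, 1) - fderiv ℂ Φ x (0, 1) * Ψ x = 0)
    {z w w' : ℂ} (hz : z ∈ U) (hw : w ∈ V) (hw' : w' ∈ V) :
    Φ (z, w) * Ψ (z, w') = Φ (z, w') * Ψ (z, w) := by
  have hslice : ∀ {F : ℂ × ℂ → ℂ}, AnalyticOnNhd ℂ F (U ×ˢ V) →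
      AnalyticOnNhd ℂ (fun w => F (z, w)) V := fun hF =>
    hF.comp (analyticOnNhd_const.prod analyticOnNhd_id) fun w hw => ⟨hz, hw⟩
  have hderiv : ∀ {F : ℂ × ℂ → ℂ}, AnalyticOnNhd ℂ F (U ×ˢ V) →
      ∀ w ∈ V, deriv (fun w => F (z, w)) w = fderiv ℂ F (z, w) (0, 1) :=
    fun hF w hw => ((hF _ ⟨hz, hw⟩).differentiableAt.hasFDerivAt.comp_hasDerivAt w
      ((hasDerivAt_const w z).prodMk (hasDerivAt_id w))).deriv
  refine AnalyticOnNhd.mul_eq_mul_of_wronskian_eq_zero hV hVc (hslice hΦ) (hslice hΨ)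
    (fun v hv => ?_) hw hw'
  rw [hderiv hΦ v hv, hderiv hΨ v hv]
  exact hW _ ⟨hz, hv⟩

theorem exists_local_holomorphic_quotient {φ ψ : ℂ → ℂ} {ζ : ℂ} {s : Set ℂ}
    (hφ : AnalyticAt ℝ φ ζ) (hψ : AnalyticAt ℝ ψ ζ)
    (hg : ∀ᶠ z in 𝓝 ζ, φ z * dbar ψ z - dbar φ z * ψ z = 0) (hψ0 : ∃ᶠ z in 𝓝 ζ, ψ z ≠ 0)
    (hs : s ∈ 𝓝 ζ) :
    ∃ V : Set ℂ, IsOpen V ∧ IsConnected V ∧ ζ ∈ V ∧ V ⊆ s ∧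
      ∃ φh ψh : ℂ → ℂ, AnalyticOnNhd ℂ φh V ∧ AnalyticOnNhd ℂ ψh V ∧
        (¬ ∀ z ∈ V, ψh z = 0) ∧ ∀ z ∈ V, φ z * ψh z = φh z * ψ z := by
  obtain ⟨r₁, hr₁, Φ, hΦ, hΦφ⟩ := hφ.exists_complexification
  obtain ⟨r₂, hr₂, Ψ, hΨ, hΨψ⟩ := hψ.exists_complexification
  obtain ⟨r₃, hr₃, hs⟩ := Metric.mem_nhds_iff.1 hs
  set r := min (min r₁ r₂) r₃
  have hr : 0 < r := lt_min (lt_min hr₁ hr₂) hr₃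
  have hrr₁ : r ≤ r₁ := (min_le_left _ _).trans (min_le_left _ _)
  have hrr₂ : r ≤ r₂ := (min_le_left _ _).trans (min_le_right _ _)
  replace hΦ := hΦ.mono (ball_subset_ball hrr₁)
  replace hΨ := hΨ.mono (ball_subset_ball hrr₂)
  replace hΦφ : ∀ z ∈ ball ζ r, Φ (z, conj z) = φ z := fun z hz => hΦφ z (ball_subset_ball hrr₁ hz)
  replace hΨψ : ∀ z ∈ ball ζ r, Ψ (z, conj z) = ψ z := fun z hz => hΨψ z (ball_subset_ball hrr₂ hz)
  have hW : ∀ x ∈ ball (ζ, conj ζ) r,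
      Φ x * fderiv ℂ Ψ x (0, 1) - fderiv ℂ Φ x (0, 1) * Ψ x = 0 := fun x hx =>
    wronskian_complexification_eq_zero hr hΦ hΨ hΦφ hΨψ hg hx
  rw [← ball_prod_same] at hΦ hΨ hW
  have hconj : ∀ {z}, z ∈ ball ζ r → conj z ∈ ball (conj ζ) r := by
    intro z hz; rwa [mem_ball, dist_conj_conj]
  obtain ⟨z₀, hψz₀, hz₀⟩ := (hψ0.and_eventually (ball_mem_nhds ζ hr)).exists
  refine ⟨ball ζ r, isOpen_ball, (convex_ball ζ r).isConnected (nonempty_ball.2 hr),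
    mem_ball_self hr, (ball_subset_ball (min_le_right _ _)).trans hs, fun z => Φ (z, conj z₀),
    fun z => Ψ (z, conj z₀),
    hΦ.comp (analyticOnNhd_id.prod analyticOnNhd_const) fun z hz => ⟨hz, hconj hz₀⟩,
    hΨ.comp (analyticOnNhd_id.prod analyticOnNhd_const) fun z hz => ⟨hz, hconj hz₀⟩,
    fun h => hψz₀ ((hΨψ z₀ hz₀).symm.trans (h z₀ hz₀)), fun z hz => ?_⟩
  rw [← hΦφ z hz, ← hΨψ z hz]
  exact mul_eq_mul_of_wronskian_snd_eq_zero isOpen_ball (convex_ball _ _).isPreconnected hΦ hΨ hW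
    hz (hconj hz) (hconj hz₀)

theorem quotient_real_analytic_holomorphic_near_point_is_meromorphic_general
    (D : Set ℂ) (hD : IsOpen D) (hDconn : IsConnected D)
    (φ ψ : ℂ → ℂ) (hφ : AnalyticOnNhd ℝ φ D) (hψ : AnalyticOnNhd ℝ ψ D)
    (ζ0 : ℂ) (hζ0 : ζ0 ∈ D) (hψζ0 : ψ ζ0 ≠ 0)
    (W : Set ℂ) (hζ0W : ζ0 ∈ W)
    (hhol : AnalyticOnNhd ℂ (fun z => φ z / ψ z) W) :
    ∀ ζ' ∈ D, ∃ V : Set ℂ, IsOpen V ∧ IsConnected V ∧ ζ' ∈ V ∧ V ⊆ D ∧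
      ∃ φh ψh : ℂ → ℂ, AnalyticOnNhd ℂ φh V ∧ AnalyticOnNhd ℂ ψh V ∧
        (¬ ∀ z ∈ V, ψh z = 0) ∧ ∀ z ∈ V, φ z * ψh z = φh z * ψ z := by
  intro ζ' hζ'
  have hg : EqOn (fun z => φ z * dbar ψ z - dbar φ z * ψ z) 0 D := by
    refine AnalyticOnNhd.eqOn_zero_of_preconnected_of_eventuallyEq_zero
      (fun z hz => ((hφ z hz).mul (hψ.dbar z hz)).sub ((hφ.dbar z hz).mul (hψ z hz)))
      hDconn.isPreconnected hζ0 ?_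
    filter_upwards [(hhol ζ0 hζ0W).eventually_analyticAt, hD.mem_nhds hζ0,
      (hψ ζ0 hζ0).continuousAt.eventually_ne hψζ0] with z hq hzD hψz
    exact dbar_wronskian_eq_zero_of_differentiableAt_div hq.differentiableAt
      (hψ z hzD).differentiableAt hψz
  have hψ' : ∃ᶠ z in 𝓝 ζ', ψ z ≠ 0 := fun h => hψζ0 <|
    hψ.eqOn_zero_of_preconnected_of_eventuallyEq_zero hDconn.isPreconnected hζ'
      (h.mono fun _ => not_not.1) hζ0
  exact exists_local_holomorphic_quotient (hφ ζ' hζ') (hψ ζ' hζ')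
    (hg.eventuallyEq_of_mem (hD.mem_nhds hζ')) hψ' (hD.mem_nhds hζ')

/-- Lemma 3.5 of the paper (elimination of singularities): if `φ, ψ` are real analytic
on a nonempty connected open set `D ⊆ ℂ`, `ψ (ζ0) ≠ 0`, and `φ/ψ` is holomorphic on
some open neighborhood `W` of `ζ0` inside `D`, then `φ/ψ` is meromorphic on `D`:
near each point of `D` it is a quotient of holomorphic functions. -/
theorem quotient_real_analytic_holomorphic_near_point_is_meromorphic
    (D : Set ℂ) (hD : IsOpen D) (hDne : D.Nonempty) (hDconn : IsConnected D)
    (φ ψ : ℂ → ℂ) (hφ : AnalyticOnNhd ℝ φ D) (hψ : AnalyticOnNhd ℝ ψ D)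
    (ζ0 : ℂ) (hζ0 : ζ0 ∈ D) (hψζ0 : ψ ζ0 ≠ 0)
    (W : Set ℂ) (hW : IsOpen W) (hζ0W : ζ0 ∈ W) (hWD : W ⊆ D)
    (hhol : AnalyticOnNhd ℂ (fun z => φ z / ψ z) W) :
    ∀ ζ' ∈ D, ∃ V : Set ℂ, IsOpen V ∧ IsConnected V ∧ ζ' ∈ V ∧ V ⊆ D ∧
      ∃ φh ψh : ℂ → ℂ, AnalyticOnNhd ℂ φh V ∧ AnalyticOnNhd ℂ ψh V ∧
        (¬ ∀ z ∈ V, ψh z = 0) ∧ ∀ z ∈ V, φ z * ψh z = φh z * ψ z :=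
  quotient_real_analytic_holomorphic_near_point_is_meromorphic_general D hD hDconn φ ψ hφ hψ ζ0 hζ0
    hψζ0 W hζ0W hhol
end

section
/- Let U ⊆ ℂ be an open set, let f : ℂ → ℂ be real analytic on U, and let a ∈ ℂ with a ≠ 0 be such that the closed segment S = {t·a : t ∈ [0,1]} is contained in U. Then there exist an open set Ω with S ⊆ Ω ⊆ U and a function g : ℂ → ℂ holomorphic on Ω such that g(z) = f(z) for every z ∈ S. -/
/-!
Near each `t ∈ [0, 1]` the real Taylor series of `t ↦ f (t • a)` also converges on a complex disc
centred at `t`, where it defines a holomorphic extension. Two such discs that meet have a convex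
intersection containing a real point, on whose real neighbourhood both extensions agree with the
original function; by the identity theorem they agree on the whole intersection, so they glue to
a holomorphic `G` on a neighbourhood of `[0, 1] ⊆ ℂ`, and `g z = G (z / a)`.
-/

open Set Metric Filter Topology
open scoped ENNReal

section

variable {E : Type*} [NormedAddCommGroup E] [NormedSpace ℂ E]

namespace FormalMultilinearSeries

noncomputable def complexify (p : FormalMultilinearSeries ℝ ℝ E) :
    FormalMultilinearSeries ℂ ℂ E :=
  fun n => ContinuousMultilinearMap.mkPiRing ℂ (Fin n) (p.coeff n)

variable (p : FormalMultilinearSeries ℝ ℝ E)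

theorem norm_complexify_apply (n : ℕ) : ‖p.complexify n‖ = ‖p n‖ := by
  simp [complexify]

theorem radius_complexify : p.complexify.radius = p.radius := by
  simp only [radius, norm_complexify_apply]

theorem complexify_apply_ofReal (n : ℕ) (x : ℝ) :
    (p.complexify n fun _ => (x : ℂ)) = p n fun _ => x := by
  simp [complexify, ← Complex.coe_smul]

theorem complexify_sum_ofReal (x : ℝ) : p.complexify.sum x = p.sum x := by
  simp only [FormalMultilinearSeries.sum, complexify_apply_ofReal]

end FormalMultilinearSeries

theorem HasFPowerSeriesOnBall.complexify_sum_ofReal_sub {h : ℝ → E}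
    {p : FormalMultilinearSeries ℝ ℝ E} {t : ℝ} {r : ℝ≥0∞} (hp : HasFPowerSeriesOnBall h p t r)
    {x : ℝ} (hx : (x : ℂ) ∈ eball (t : ℂ) r) : p.complexify.sum (x - t) = h x := by
  have hx' : x - t ∈ eball (0 : ℝ) r := by
    rwa [mem_eball, edist_zero_right, ← edist_eq_enorm_sub, ← Complex.isometry_ofReal.edist_eq]
  rw [← Complex.ofReal_sub, p.complexify_sum_ofReal, ← hp.sum hx', add_sub_cancel]

theorem Complex.ofReal_re_mem_eball {z : ℂ} {x : ℝ} {r : ℝ≥0∞} (hz : z ∈ eball (x : ℂ) r) :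
    (z.re : ℂ) ∈ eball (x : ℂ) r := by
  rw [mem_eball] at hz ⊢
  refine lt_of_le_of_lt ?_ hz
  rw [edist_dist, edist_dist, Complex.dist_eq, Complex.dist_eq]
  gcongr
  simpa [← Complex.ofReal_sub, Complex.norm_real] using Complex.abs_re_le_norm (z - x)

theorem AnalyticOnNhd.eqOn_of_preconnected_of_eqOn_ofReal {f g : ℂ → E} {V : Set ℂ}
    (hf : AnalyticOnNhd ℂ f V) (hg : AnalyticOnNhd ℂ g V) (hV : IsPreconnected V)
    (hVo : IsOpen V) {x₀ : ℝ} (hx₀ : (x₀ : ℂ) ∈ V)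
    (hfg : ∀ x : ℝ, (x : ℂ) ∈ V → f x = g x) : EqOn f g V := by
  refine hf.eqOn_of_preconnected_of_frequently_eq hg hV hx₀ ?_
  have hreal : ∀ᶠ x : ℝ in 𝓝[≠] x₀, f x = g x :=
    eventually_nhdsWithin_of_eventually_nhds
      (Eventually.mono ((hVo.preimage Complex.continuous_ofReal).mem_nhds hx₀) hfg)
  have hmaps : Tendsto ((↑) : ℝ → ℂ) (𝓝[≠] x₀) (𝓝[≠] (x₀ : ℂ)) :=
    Complex.continuous_ofReal.continuousWithinAt.tendsto_nhdsWithin fun _ _ ↦ by simp_all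
  exact hmaps.frequently hreal.frequently

theorem exists_analyticOnNhd_iUnion_eqOn {𝕜 F G ι : Type*} [NontriviallyNormedField 𝕜]
    [NormedAddCommGroup F] [NormedSpace 𝕜 F] [NormedAddCommGroup G] [NormedSpace 𝕜 G]
    {V : ι → Set F} {H : ι → F → G} (hV : ∀ i, IsOpen (V i))
    (hH : ∀ i, AnalyticOnNhd 𝕜 (H i) (V i)) (hcompat : ∀ i j, EqOn (H i) (H j) (V i ∩ V j)) :
    ∃ g : F → G, AnalyticOnNhd 𝕜 g (⋃ i, V i) ∧ ∀ i, EqOn g (H i) (V i) := by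
  classical
  let g z := if hz : ∃ i, z ∈ V i then H hz.choose z else 0
  have hgH : ∀ i, EqOn g (H i) (V i) := fun i z hz => by
    have hex : ∃ i, z ∈ V i := ⟨i, hz⟩
    simpa only [g, dif_pos hex] using hcompat _ _ ⟨hex.choose_spec, hz⟩
  refine ⟨g, ?_, hgH⟩
  simp only [AnalyticOnNhd, mem_iUnion]
  rintro z ⟨i, hz⟩
  exact (hH i z hz).congr (eventuallyEq_of_mem ((hV i).mem_nhds hz) (hgH i).symm)

section Complete

variable [CompleteSpace E]

theorem FormalMultilinearSeries.analyticOnNhd_complexify_sum_sub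
    (p : FormalMultilinearSeries ℝ ℝ E) (t : ℂ) :
    AnalyticOnNhd ℂ (fun z => p.complexify.sum (z - t)) (eball t p.radius) := by
  rcases eq_zero_or_pos p.radius with h0 | hpos
  · simp [h0]
  rw [← p.radius_complexify] at hpos ⊢
  simpa using ((p.complexify.hasFPowerSeriesOnBall hpos).comp_sub t).analyticOnNhd

theorem AnalyticAt.exists_analyticOnNhd_eball_ofReal_eq {h : ℝ → E} {t : ℝ}
    (hh : AnalyticAt ℝ h t) :
    ∃ r > 0, ∃ H : ℂ → E, AnalyticOnNhd ℂ H (eball (t : ℂ) r) ∧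
      ∀ x : ℝ, (x : ℂ) ∈ eball (t : ℂ) r → H x = h x := by
  obtain ⟨p, r, hp⟩ := hh
  exact ⟨r, hp.r_pos, _, (p.analyticOnNhd_complexify_sum_sub t).mono (eball_subset_eball hp.r_le),
    fun x hx => hp.complexify_sum_ofReal_sub hx⟩

theorem exists_analyticOnNhd_ofReal_eq {s : Set ℝ} {h : ℝ → E}
    (hh : ∀ t ∈ s, AnalyticAt ℝ h t) :
    ∃ V : Set ℂ, IsOpen V ∧ (∀ t ∈ s, (t : ℂ) ∈ V) ∧
      ∃ H : ℂ → E, AnalyticOnNhd ℂ H V ∧ ∀ t ∈ s, H t = h t := by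
  choose r hr H hH hHh using fun t : s => (hh t t.2).exists_analyticOnNhd_eball_ofReal_eq
  have hcompat : ∀ t u, EqOn (H t) (H u) (eball (t : ℂ) (r t) ∩ eball (u : ℂ) (r u)) := by
    intro t u
    rcases (eball (t : ℂ) (r t) ∩ eball (u : ℂ) (r u)).eq_empty_or_nonempty with he | ⟨z, hzt, hzu⟩
    · simp [he]
    exact ((hH t).mono inter_subset_left).eqOn_of_preconnected_of_eqOn_ofReal
      ((hH u).mono inter_subset_right) ((convex_eball _ _).inter (convex_eball _ _)).isPreconnected
      (isOpen_eball.inter isOpen_eball)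
      ⟨Complex.ofReal_re_mem_eball hzt, Complex.ofReal_re_mem_eball hzu⟩
      fun x hx => (hHh t x hx.1).trans (hHh u x hx.2).symm
  obtain ⟨G, hG, hGH⟩ := exists_analyticOnNhd_iUnion_eqOn (fun _ => isOpen_eball) hH hcompat
  have hcenter (t : s) : (t : ℂ) ∈ eball (t : ℂ) (r t) := mem_eball_self (hr t)
  refine ⟨_, isOpen_iUnion fun _ => isOpen_eball, fun t ht => mem_iUnion.2 ⟨⟨t, ht⟩, hcenter _⟩,
    G, hG, fun t ht => ?_⟩
  exact (hGH ⟨t, ht⟩ (hcenter _)).trans (hHh _ t (hcenter _))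

end Complete

end

/-- Key step inside the proof of Lemma 3.5 of the paper: the restriction of a real
analytic function `f` on `U ⊆ ℂ` to a radial closed segment `S = {t • a : t ∈ [0,1]}`
contained in `U` admits a holomorphic extension to an open neighborhood
`Ω` of `S` contained in `U`. -/
theorem real_analytic_restriction_to_segment_extends_holomorphically
    (U : Set ℂ) (hU : IsOpen U) (f : ℂ → ℂ) (hf : AnalyticOnNhd ℝ f U)
    (a : ℂ) (ha : a ≠ 0)
    (hS : {z : ℂ | ∃ t : ℝ, t ∈ Set.Icc (0 : ℝ) 1 ∧ z = t • a} ⊆ U) :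
    ∃ Ω : Set ℂ, IsOpen Ω ∧
      {z : ℂ | ∃ t : ℝ, t ∈ Set.Icc (0 : ℝ) 1 ∧ z = t • a} ⊆ Ω ∧ Ω ⊆ U ∧
      ∃ g : ℂ → ℂ, AnalyticOnNhd ℂ g Ω ∧
        ∀ z ∈ {z : ℂ | ∃ t : ℝ, t ∈ Set.Icc (0 : ℝ) 1 ∧ z = t • a}, g z = f z := by
  have hseg : ∀ t ∈ Icc (0 : ℝ) 1, AnalyticAt ℝ (fun t : ℝ => f (t • a)) t := fun t ht =>
    (hf _ (hS ⟨t, ht, rfl⟩)).comp (f := fun s : ℝ => s • a) (by fun_prop)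
  obtain ⟨V, hVo, hsV, H, hH, hHf⟩ := exists_analyticOnNhd_ofReal_eq hseg
  refine ⟨(· / a) ⁻¹' V ∩ U, (hVo.preimage (continuous_id.div_const a)).inter hU, ?_,
    inter_subset_right, fun z => H (z / a),
    fun z hz => (hH _ hz.1).comp (f := (· / a)) (by fun_prop), ?_⟩
  · rintro _ ⟨t, ht, rfl⟩
    exact ⟨by simpa [ha] using hsV t ht, hS ⟨t, ht, rfl⟩⟩
  · rintro _ ⟨t, ht, rfl⟩
    simpa [ha] using hHf t ht
end

section
/- Let ρ : ℂ → ℝ be real analytic on an open neighborhood of 0, with ρ(0) = 0 and with nonzero real differential (Fréchet derivative over ℝ) at 0. Then there exists an open neighborhood V of 0 in ℂ with the following property. Set X = {ζ ∈ V : ρ(ζ) = 0}, V⁻ = {ζ ∈ V : ρ(ζ) < 0} and V⁺ = {ζ ∈ V : ρ(ζ) > 0}. For every function φ⁻ : ℂ → ℂ that is holomorphic on V⁻ and continuous on V⁻ ∪ X, there exists a function φ⁺ : ℂ → ℂ, continuous on V⁺ ∪ X, such that the function ζ ↦ conj(φ⁺(ζ)) is holomorphic on V⁺ and φ⁺ =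 φ⁻ on X. -/
/-!
Inverting the real analytic map `ζ ↦ ζ m + i (ρ ζ - Im (ζ m))`, whose imaginary part is `ρ` and
whose differential at `0` is multiplication by `m ≠ 0`, parametrizes `{ρ = 0}` near `0` by a real
analytic curve `γ`. Summing the power series of `γ` at complex arguments gives a holomorphic `Γ`
with `Γ' 0 ≠ 0` mapping the real axis into `{ρ = 0}`; since `γ` is transversal to the level sets
of `ρ`, the function `ρ ∘ Γ` has the sign of `Im` on a small disc `B`. On `V = Γ '' B` the map
`R = Γ ∘ conj ∘ Γ⁻¹` is an antiholomorphic reflection exchanging `V⁺` and `V⁻` and fixing `X`,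
and `φ⁺ = φ⁻ ∘ R`.
-/

open Complex Set Metric Filter Topology
open scoped ComplexConjugate

theorem ContinuousLinearMap.exists_eq_im_mul (L : ℂ →L[ℝ] ℝ) : ∃ m : ℂ, ∀ ζ, L ζ = (ζ * m).im := by
  refine ⟨L I + L 1 * I, fun ζ => ?_⟩
  calc L ζ = L (ζ.re • 1 + ζ.im • I) := by simp
    _ = (ζ * (L I + L 1 * I)).im := by
      simp only [map_add, map_smul, smul_eq_mul]
      simp [mul_comm]

theorem AnalyticAt.exists_openPartialHomeomorph {𝕜 E F : Type*} [NontriviallyNormedField 𝕜]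
    [NormedAddCommGroup E] [NormedSpace 𝕜 E] [CompleteSpace E]
    [NormedAddCommGroup F] [NormedSpace 𝕜 F] [CompleteSpace F]
    {f : E → F} {f' : E ≃L[𝕜] F} {a : E} (hf : AnalyticAt 𝕜 f a)
    (hf' : HasFDerivAt f (f' : E →L[𝕜] F) a) :
    ∃ Φ : OpenPartialHomeomorph E F, ⇑Φ = f ∧ a ∈ Φ.source ∧
      AnalyticAt 𝕜 Φ.symm (f a) ∧ HasFDerivAt Φ.symm (f'.symm : F →L[𝕜] E) (f a) := by
  have hstrict : HasStrictFDerivAt f (f' : E →L[𝕜] F) a := hf'.fderiv ▸ hf.hasStrictFDerivAt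
  refine ⟨hstrict.toOpenPartialHomeomorph f, hstrict.toOpenPartialHomeomorph_coe,
    hstrict.mem_toOpenPartialHomeomorph_source, ?_, hstrict.to_localInverse.hasFDerivAt⟩
  exact (hstrict.toOpenPartialHomeomorph f).analyticAt_symm' (i := f')
    hstrict.mem_toOpenPartialHomeomorph_source hf hf'.fderiv

theorem AnalyticAt.exists_openPartialHomeomorph_of_deriv_ne_zero {𝕜 : Type*}
    [NontriviallyNormedField 𝕜] [CompleteSpace 𝕜] {f : 𝕜 → 𝕜} {a : 𝕜} (hf : AnalyticAt 𝕜 f a)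
    (hf' : deriv f a ≠ 0) :
    ∃ Φ : OpenPartialHomeomorph 𝕜 𝕜, ⇑Φ = f ∧ a ∈ Φ.source ∧ AnalyticAt 𝕜 Φ.symm (f a) := by
  have hfe : HasFDerivAt f
      (ContinuousLinearEquiv.unitsEquivAut 𝕜 (Units.mk0 _ hf') : 𝕜 →L[𝕜] 𝕜) a :=
    hf.differentiableAt.hasDerivAt.hasFDerivAt.congr_fderiv
      (ContinuousLinearMap.ext fun _ => by simp)
  obtain ⟨Φ, hΦ, ha, hΦsymm, -⟩ := hf.exists_openPartialHomeomorph hfe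
  exact ⟨Φ, hΦ, ha, hΦsymm⟩

theorem AnalyticAt.exists_analyticAt_ofReal_eq {g : ℝ → ℂ} (hg : AnalyticAt ℝ g 0) :
    ∃ G : ℂ → ℂ, AnalyticAt ℂ G 0 ∧ ∀ᶠ t : ℝ in 𝓝 0, G t = g t := by
  obtain ⟨p, r, hp⟩ := hg
  set q := FormalMultilinearSeries.ofScalars ℂ p.coeff
  have hradius : q.radius = p.radius := by
    simp only [FormalMultilinearSeries.radius, q, FormalMultilinearSeries.ofScalars_norm,
      p.norm_apply_eq_norm_coef]
  have hr : r ≤ q.radius := hradius ▸ hp.r_le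
  refine ⟨q.sum, (q.hasFPowerSeriesOnBall (hp.r_pos.trans_le hr)).analyticAt, ?_⟩
  filter_upwards [eball_mem_nhds 0 hp.r_pos] with t ht
  have hg : HasSum (fun n => p n fun _ => t) (g t) := by simpa using hp.hasSum ht
  have hG : HasSum (fun n => q n fun _ => (t : ℂ)) (q.sum t) :=
    q.hasSum (eball_subset_eball hr (by simpa [edist_zero_right, enorm_eq_nnnorm] using ht))
  refine hG.unique ?_
  convert hg using 1
  ext n
  simp [q, p.apply_eq_pow_smul_coeff]

theorem sign_eq_sign_im_of_fderiv_I_pos {S : Set ℂ} (hS : Convex ℝ S) {H : ℂ → ℝ}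
    {H' : ℂ → ℂ →L[ℝ] ℝ} (hH : ∀ ξ ∈ S, HasFDerivAt H (H' ξ) ξ) (hpos : ∀ ξ ∈ S, 0 < H' ξ I)
    (hreal : ∀ x : ℝ, (x : ℂ) ∈ S → H x = 0) {ξ : ℂ} (hξ : ξ ∈ S) (hξre : (ξ.re : ℂ) ∈ S) :
    SignType.sign (H ξ) = SignType.sign ξ.im := by
  set ℓ : ℝ →ᵃ[ℝ] ℂ := AffineMap.lineMap (ξ.re : ℂ) (ξ.re + I)
  have hℓ : ∀ s : ℝ, ℓ s = ξ.re + s * I := fun s => by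
    simp [ℓ, AffineMap.lineMap_apply, add_comm]
  have hderiv : ∀ s ∈ ℓ ⁻¹' S, HasDerivAt (H ∘ ℓ) (H' (ℓ s) I) s := by
    intro s hs
    have hline : HasDerivAt ℓ I s := by
      rw [show ⇑ℓ = fun s : ℝ => (ξ.re : ℂ) + s * I from funext hℓ]
      simpa using ((hasDerivAt_id (s : ℂ)).comp_ofReal.mul_const I).const_add (ξ.re : ℂ)
    exact (hH _ hs).comp_hasDerivAt s hline
  have hmono : StrictMonoOn (H ∘ ℓ) (ℓ ⁻¹' S) := by
    refine strictMonoOn_of_deriv_pos (hS.affine_preimage ℓ)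
      (fun s hs => (hderiv s hs).continuousAt.continuousWithinAt) fun s hs => ?_
    have hs : s ∈ ℓ ⁻¹' S := interior_subset hs
    rw [(hderiv s hs).deriv]
    exact hpos _ hs
  have hℓ0 : ℓ 0 = ξ.re := by simp [hℓ]
  have hℓim : ℓ ξ.im = ξ := by simp [hℓ, re_add_im]
  have h0 : (0 : ℝ) ∈ ℓ ⁻¹' S := by simpa [hℓ0] using hξre
  have him : ξ.im ∈ ℓ ⁻¹' S := by simpa [hℓim] using hξ
  have hHre : H (ℓ 0) = 0 := hℓ0 ▸ hreal _ hξre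
  rcases lt_trichotomy ξ.im 0 with hneg | hzero | hpos
  · have := hmono him h0 hneg
    simp only [Function.comp_apply, hℓim, hHre] at this
    rw [sign_neg this, sign_neg hneg]
  · have : ξ = ξ.re := by simp [Complex.ext_iff, hzero]
    rw [hzero, this, hreal _ hξre]
  · have := hmono h0 him hpos
    simp only [Function.comp_apply, hℓim, hHre] at this
    rw [sign_pos this, sign_pos hpos]

theorem exists_analyticAt_curve_of_fderiv_ne_zero {ρ : ℂ → ℝ} (hρ : AnalyticAt ℝ ρ 0)
    (hρ0 : ρ 0 = 0) (hdρ : fderiv ℝ ρ 0 ≠ 0) :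
    ∃ (γ : ℝ → ℂ) (w : ℂ), AnalyticAt ℝ γ 0 ∧ γ 0 = 0 ∧ HasDerivAt γ w 0 ∧
      fderiv ℝ ρ 0 (I * w) = 1 ∧ ∀ᶠ t : ℝ in 𝓝 0, ρ (γ t) = 0 := by
  obtain ⟨m, hm⟩ := (fderiv ℝ ρ 0).exists_eq_im_mul
  have hm0 : m ≠ 0 := by
    rintro rfl
    exact hdρ (ContinuousLinearMap.ext fun ζ => by simp [hm])
  set e : ℂ ≃L[ℝ] ℂ :=
    (ContinuousLinearEquiv.unitsEquivAut ℂ (Units.mk0 m hm0)).restrictScalars ℝ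
  have he : ∀ ζ, e ζ = ζ * m := fun _ => rfl
  set F : ℂ → ℂ := fun ζ => ζ * m + I * (ρ ζ - (ζ * m).im : ℝ)
  have hF : AnalyticAt ℝ F 0 :=
    ((e : ℂ →L[ℝ] ℂ).analyticAt 0).add (analyticAt_const.mul ((ofRealCLM.analyticAt _).comp
      (hρ.sub ((imCLM.comp (e : ℂ →L[ℝ] ℂ)).analyticAt 0))))
  have hF' : HasFDerivAt F (e : ℂ →L[ℝ] ℂ) 0 := by
    have hρ' : HasFDerivAt (fun ζ => ρ ζ - (ζ * m).im)
        (fderiv ℝ ρ 0 - imCLM.comp (e : ℂ →L[ℝ] ℂ)) 0 :=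
      hρ.differentiableAt.hasFDerivAt.sub (imCLM.comp (e : ℂ →L[ℝ] ℂ)).hasFDerivAt
    have hL : fderiv ℝ ρ 0 - imCLM.comp (e : ℂ →L[ℝ] ℂ) = 0 := by
      ext ζ
      simp [hm, he]
    rw [hL] at hρ'
    exact ((e : ℂ →L[ℝ] ℂ).hasFDerivAt.add
      ((ofRealCLM.hasFDerivAt.comp 0 hρ').const_mul I)).congr_fderiv (by simp)
  have hF0 : F 0 = 0 := by simp [F, hρ0]
  obtain ⟨Φ, hΦ, h0, hΦsymm, hΦsymm'⟩ := hF.exists_openPartialHomeomorph hF'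
  rw [hF0] at hΦsymm hΦsymm'
  have hγ0 : Φ.symm 0 = 0 := by simpa [hΦ, hF0] using Φ.left_inv h0
  refine ⟨fun t => Φ.symm t, m⁻¹, hΦsymm.comp_of_eq (ofRealCLM.analyticAt 0) (by simp), hγ0, ?_,
    by simp [hm, hm0], ?_⟩
  · have := hΦsymm'.comp_hasDerivAt_of_eq (0 : ℝ) (hasDerivAt_id (0 : ℂ)).comp_ofReal (by simp)
    simpa [Function.comp_def, e] using this
  · have htgt : (0 : ℂ) ∈ Φ.target := by simpa [hΦ, hF0] using Φ.map_source h0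
    filter_upwards [continuous_ofReal.continuousAt.preimage_mem_nhds
      (Φ.open_target.mem_nhds (by simpa using htgt))] with t ht
    have := congrArg im (Φ.right_inv ht)
    simpa [hΦ, F] using this

theorem exists_holomorphic_param_of_fderiv_ne_zero {ρ : ℂ → ℝ} (hρ : AnalyticAt ℝ ρ 0)
    (hρ0 : ρ 0 = 0) (hdρ : fderiv ℝ ρ 0 ≠ 0) :
    ∃ Γ : ℂ → ℂ, AnalyticAt ℂ Γ 0 ∧ Γ 0 = 0 ∧ (∀ᶠ t : ℝ in 𝓝 0, ρ (Γ t) = 0) ∧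
      0 < fderiv ℝ ρ 0 (I * deriv Γ 0) := by
  obtain ⟨γ, w, hγ, hγ0, hγw, hw, hργ⟩ := exists_analyticAt_curve_of_fderiv_ne_zero hρ hρ0 hdρ
  obtain ⟨Γ, hΓ, hΓγ⟩ := hγ.exists_analyticAt_ofReal_eq
  have hΓw : deriv Γ 0 = w :=
    ((hΓ.differentiableAt.hasDerivAt.comp_ofReal (z := 0)).congr_of_eventuallyEq
      (hΓγ.mono fun _ => Eq.symm)).unique (by simpa using hγw)
  refine ⟨Γ, hΓ, by simpa [hγ0] using Filter.Eventually.self_of_nhds hΓγ, ?_, by simp [hΓw, hw]⟩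
  filter_upwards [hΓγ, hργ] with t hΓt hρt
  rw [hΓt, hρt]

theorem eventually_sign_comp_eq_sign_im {ρ : ℂ → ℝ} {Γ : ℂ → ℂ} (hρ : AnalyticAt ℝ ρ 0)
    (hΓ : AnalyticAt ℂ Γ 0) (hΓ0 : Γ 0 = 0) (hreal : ∀ᶠ t : ℝ in 𝓝 0, ρ (Γ t) = 0)
    (htrans : 0 < fderiv ℝ ρ 0 (I * deriv Γ 0)) :
    ∀ᶠ ξ in 𝓝 0, SignType.sign (ρ (Γ ξ)) = SignType.sign ξ.im := by
  set H : ℂ → ℝ := ρ ∘ Γ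
  have hH : AnalyticAt ℝ H 0 := (hΓ0 ▸ hρ).comp hΓ.restrictScalars
  have hH0 : fderiv ℝ H 0 I = fderiv ℝ ρ 0 (I * deriv Γ 0) := by
    have := (hΓ0 ▸ hρ.differentiableAt.hasFDerivAt).comp (0 : ℂ)
      (hΓ.differentiableAt.hasDerivAt.hasFDerivAt.restrictScalars ℝ)
    simp [this.fderiv, H, hΓ0]
  have hpos : ∀ᶠ ξ in 𝓝 0, 0 < fderiv ℝ H ξ I :=
    continuousAt_const.eventually_lt (hH.fderiv.continuousAt.clm_apply continuousAt_const)
      (hH0 ▸ htrans)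
  have hre : ∀ᶠ ξ : ℂ in 𝓝 0, ρ (Γ ξ.re) = 0 :=
    (continuous_re.tendsto' 0 0 rfl).eventually hreal
  obtain ⟨r, hr, hball⟩ := eventually_nhds_iff_ball.mp
    (hH.eventually_analyticAt.and (hpos.and hre))
  filter_upwards [ball_mem_nhds 0 hr] with ξ hξ
  have hre_mem : ∀ ζ ∈ ball (0 : ℂ) r, (ζ.re : ℂ) ∈ ball (0 : ℂ) r := fun ζ hζ => by
    simpa using (abs_re_le_norm ζ).trans_lt (mem_ball_zero_iff.mp hζ)
  exact sign_eq_sign_im_of_fderiv_I_pos (convex_ball 0 r)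
    (fun ζ hζ => (hball ζ hζ).1.differentiableAt.hasFDerivAt) (fun ζ hζ => (hball ζ hζ).2.1)
    (fun x hx => by simpa [H] using (hball x hx).2.2) hξ (hre_mem ξ hξ)

theorem exists_antiholomorphic_reflection {ρ : ℂ → ℝ} {Ω : Set ℂ} (hΩ : Ω ∈ 𝓝 0)
    (hρ : AnalyticAt ℝ ρ 0) (hρ0 : ρ 0 = 0) (hdρ : fderiv ℝ ρ 0 ≠ 0) :
    ∃ V : Set ℂ, IsOpen V ∧ 0 ∈ V ∧ V ⊆ Ω ∧ ∃ R : ℂ → ℂ, MapsTo R V V ∧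
      DifferentiableOn ℂ (conj ∘ R) V ∧
      (∀ ζ ∈ V, SignType.sign (ρ (R ζ)) = -SignType.sign (ρ ζ)) ∧
      ∀ ζ ∈ V, ρ ζ = 0 → R ζ = ζ := by
  obtain ⟨Γ, hΓ, hΓ0, hreal, htrans⟩ := exists_holomorphic_param_of_fderiv_ne_zero hρ hρ0 hdρ
  obtain ⟨Ψ, hΨ, h0Ψ, hΨsymm⟩ :=
    hΓ.exists_openPartialHomeomorph_of_deriv_ne_zero fun h => by simp [h] at htrans
  rw [hΓ0] at hΨsymm
  obtain ⟨r, hr, hB⟩ := eventually_nhds_iff_ball.mp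
    ((Ψ.open_source.eventually_mem h0Ψ).and <| (hΓ.continuousAt.eventually_mem (hΓ0 ▸ hΩ)).and <|
      hΓ.eventually_analyticAt.and <|
      (hΓ.continuousAt.eventually (hΓ0 ▸ hΨsymm.eventually_analyticAt)).and <|
      eventually_sign_comp_eq_sign_im hρ hΓ hΓ0 hreal htrans)
  simp only [forall₂_and] at hB
  obtain ⟨hsrc, hΩB, hΓB, hΨB, hsign⟩ := hB
  have hconj : ∀ ξ ∈ ball (0 : ℂ) r, conj ξ ∈ ball (0 : ℂ) r := fun ξ hξ => by
    simpa using hξ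
  have hinv : ∀ ξ ∈ ball (0 : ℂ) r, Ψ.symm (Γ ξ) = ξ := fun ξ hξ => hΨ ▸ Ψ.left_inv (hsrc ξ hξ)
  refine ⟨Γ '' ball 0 r, hΨ ▸ Ψ.isOpen_image_of_subset_source isOpen_ball hsrc,
    ⟨0, mem_ball_self hr, hΓ0⟩, ?_, fun ζ => Γ (conj (Ψ.symm ζ)), ?_, ?_, ?_, ?_⟩
  · rintro _ ⟨ξ, hξ, rfl⟩
    exact hΩB ξ hξ
  · rintro _ ⟨ξ, hξ, rfl⟩
    dsimp only
    rw [hinv ξ hξ]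
    exact mem_image_of_mem _ (hconj ξ hξ)
  · rintro _ ⟨ξ, hξ, rfl⟩
    have hΓconj : DifferentiableAt ℂ (conj ∘ Γ ∘ conj) (Ψ.symm (Γ ξ)) := by
      simpa [hinv ξ hξ] using (hΓB _ (hconj ξ hξ)).differentiableAt.conj_conj
    exact (hΓconj.comp _ (hΨB ξ hξ).differentiableAt).differentiableWithinAt
  · rintro _ ⟨ξ, hξ, rfl⟩
    dsimp only
    rw [hinv ξ hξ, hsign _ (hconj ξ hξ), hsign ξ hξ, conj_im, Left.sign_neg]
  · rintro _ ⟨ξ, hξ, rfl⟩ hρξ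
    have him : ξ.im = 0 := by simpa [hsign ξ hξ] using congrArg SignType.sign hρξ
    dsimp only
    rw [hinv ξ hξ, conj_eq_iff_im.mpr him]

/-- One-dimensional case of Lemma 2.3 of the paper: the Schwarz reflection principle
across a real analytic arc `{ρ = 0}` with nonvanishing real differential at `0`.
Every `φ⁻` holomorphic on `V⁻ = {ζ ∈ V : ρ ζ < 0}` and continuous on `V⁻ ∪ X`,
where `X = {ζ ∈ V : ρ ζ = 0}`, admits a continuous extension `φ⁺` to `V⁺ ∪ X`
which is antiholomorphic on `V⁺ = {ζ ∈ V : ρ ζ > 0}` and agrees with `φ⁻` on `X`. -/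
theorem schwarz_reflection_one_dim
    (ρ : ℂ → ℝ) (Ω : Set ℂ) (hΩ : IsOpen Ω) (h0Ω : (0 : ℂ) ∈ Ω)
    (hρ : AnalyticOnNhd ℝ ρ Ω) (hρ0 : ρ 0 = 0)
    (hdρ : fderiv ℝ ρ 0 ≠ 0) :
    ∃ V : Set ℂ, IsOpen V ∧ (0 : ℂ) ∈ V ∧ V ⊆ Ω ∧
      ∀ φm : ℂ → ℂ,
        AnalyticOnNhd ℂ φm {ζ ∈ V | ρ ζ < 0} →
        ContinuousOn φm {ζ ∈ V | ρ ζ ≤ 0} →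
        ∃ φp : ℂ → ℂ,
          ContinuousOn φp {ζ ∈ V | 0 ≤ ρ ζ} ∧
          AnalyticOnNhd ℂ (fun ζ => (starRingEnd ℂ) (φp ζ)) {ζ ∈ V | 0 < ρ ζ} ∧
          ∀ ζ ∈ V, ρ ζ = 0 → φp ζ = φm ζ := by
  obtain ⟨V, hV, h0V, hVΩ, R, hRV, hR, hRsign, hRfix⟩ :=
    exists_antiholomorphic_reflection (hΩ.mem_nhds h0Ω) (hρ 0 h0Ω) hρ0 hdρ
  have hRneg : ∀ ζ ∈ V, 0 < ρ ζ → ρ (R ζ) < 0 := fun ζ hζ hpos =>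
    sign_eq_neg_one_iff.mp (by rw [hRsign ζ hζ, sign_pos hpos])
  refine ⟨V, hV, h0V, hVΩ, fun φm hφm hφmc => ⟨φm ∘ R, ?_, ?_, fun ζ hζ hρζ => by
    simp [hRfix ζ hζ hρζ]⟩⟩
  · have hRc : ContinuousOn R V := by
      simpa [Function.comp_def] using continuous_conj.comp_continuousOn hR.continuousOn
    refine hφmc.comp (hRc.mono (sep_subset _ _)) fun ζ ⟨hζ, hρζ⟩ => ⟨hRV hζ, ?_⟩
    rcases hρζ.lt_or_eq with hpos | hzero
    · exact (hRneg ζ hζ hpos).le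
    · rw [hRfix ζ hζ hzero.symm, ← hzero]
  · have hopen : IsOpen {ζ ∈ V | 0 < ρ ζ} :=
      (hρ.mono hVΩ).continuousOn.isOpen_inter_preimage hV isOpen_Ioi
    refine DifferentiableOn.analyticOnNhd (fun ζ ⟨hζ, hρζ⟩ => ?_) hopen
    have hφ : DifferentiableAt ℂ (conj ∘ φm ∘ conj) (conj (R ζ)) :=
      (hφm _ ⟨hRV hζ, hRneg ζ hζ hρζ⟩).differentiableAt.conj_conj
    simpa [Function.comp_def] using
      (hφ.comp ζ ((hR ζ hζ).differentiableAt (hV.mem_nhds hζ))).differentiableWithinAt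
end
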